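/- For all α ∈ 𝕋 and all continuous h : 𝕋 → 𝕋, the skew product system (𝕋², T_h) with T_h(x,t) = (x + α, t + h(x)) has Bohr₀ large returns: for every ε > 0, the set 𝔯_ε(𝕋², T_h) = {m ∈ ℕ : ∃(x,t), d((x,t), T_h^m(x,t)) < ε} is a Bohr₀ set. -/

import Mathlib

open Function Metric Set Filter

noncomputable section

abbrev Torus := AddCircle (1 : ℝ)

/-- `A ⊆ ℕ` is a Bohr₀ set: it contains all positive `n` with `‖nα‖ < δ`
for some `δ > 0`, `d ∈ ℕ`, `α ∈ 𝕋^d` (L¹ distance to zero). -/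
def IsBohr0 (A : Set ℕ) : Prop :=
  ∃ (d : ℕ) (α : Fin d → Torus) (δ : ℝ), 0 < δ ∧
    ∀ n : ℕ, 0 < n → (∑ i, ‖n • α i‖) < δ → n ∈ A


/-- The skew product map `T_h(x,t) = (x + α, t + h(x))` on `𝕋²`. -/
def skew (α : Torus) (h : Torus → Torus) : Torus × Torus → Torus × Torus :=
  fun p => (p.1 + α, p.2 + h p.1)

namespace SkewAux
open MeasureTheory


/-- representative in `(-1/2, 1/2]` -/
def rho (t : Torus) : ℝ := (AddCircle.equivIoc (1:ℝ) (-(1/2)) t : ℝ)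

lemma coe_sum {ι : Type*} (s : Finset ι) (f : ι → ℝ) :
    ((∑ i ∈ s, f i : ℝ) : Torus) = ∑ i ∈ s, ((f i : ℝ) : Torus) :=
  map_sum (QuotientAddGroup.mk' _) f s

lemma coe_nsmul (m : ℕ) (β : ℝ) : (((m • β : ℝ)) : Torus) = m • ((β : ℝ) : Torus) :=
  map_nsmul (QuotientAddGroup.mk' _) m β

lemma rho_coe (t : Torus) : ((rho t : ℝ) : Torus) = t :=
  (AddCircle.equivIoc (1:ℝ) (-(1/2))).symm_apply_apply t

lemma continuousAt_rho {t : Torus} (ht : ‖t‖ < 1/2) : ContinuousAt rho t := by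
  have habs : |(1:ℝ)/2| = 1/2 := abs_of_nonneg (by norm_num)
  have hne : t ≠ (((-(1/2):ℝ)) : Torus) := by
    intro h
    rw [h, AddCircle.norm_eq] at ht
    rw [round_eq] at ht
    norm_num [habs] at ht
  exact continuous_subtype_val.continuousAt.comp (AddCircle.continuousAt_equivIoc _ _ hne)

private lemma intval_aux {s : Set ℝ} (hs : IsPreconnected s) {d : ℝ → ℝ} (hd : ContinuousOn d s)
    (hint : ∀ x ∈ s, ∃ z : ℤ, d x = z) {x y : ℝ} (hx : x ∈ s) (hy : y ∈ s)
    (hlt : d x < d y) : False := by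
  obtain ⟨z, hz⟩ := hint x hx
  obtain ⟨z', hz'⟩ := hint y hy
  have hmem : d x + 1/2 ∈ Icc (d x) (d y) := by
    constructor
    · linarith
    · have h1 : (z:ℝ) < z' := by rw [← hz, ← hz']; exact hlt
      have h2 : z + 1 ≤ z' := by exact_mod_cast h1
      have h3 : (z:ℝ) + 1 ≤ z' := by exact_mod_cast h2
      rw [hz, hz']; linarith
  obtain ⟨c, hcs, hc⟩ := hs.intermediate_value hx hy hd hmem
  obtain ⟨w, hw⟩ := hint c hcs
  rw [hw, hz] at hc
  have h2 : ((w - z : ℤ) : ℝ) = 1/2 := by push_cast; linarith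
  rcases eq_or_ne (w - z) 0 with h | h
  · rw [h] at h2; norm_num at h2
  · have h3 := Int.one_le_abs h
    have h4 : (1:ℝ) ≤ |((w - z : ℤ) : ℝ)| := by exact_mod_cast h3
    rw [h2, abs_of_nonneg (by norm_num : (0:ℝ) ≤ 1/2)] at h4
    norm_num at h4

/-- A continuous function on a preconnected set, valued in the integers, is constant. -/
lemma intval_const {s : Set ℝ} (hs : IsPreconnected s) {d : ℝ → ℝ} (hd : ContinuousOn d s)
    (hint : ∀ x ∈ s, ∃ z : ℤ, d x = z) {x y : ℝ} (hx : x ∈ s) (hy : y ∈ s) : d x = d y := by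
  rcases lt_trichotomy (d x) (d y) with hlt | heq | hlt
  · exact absurd hlt (fun hlt => intval_aux hs hd hint hx hy hlt)
  · exact heq
  · exact absurd hlt (fun hlt => intval_aux hs hd hint hy hx hlt)


/-- Partial lift of a continuous map `ℝ → 𝕋` on a compact interval `[0, c]`. -/
lemma exists_partial_lift (φ : ℝ → Torus) (hφ : Continuous φ) (c : ℝ) (hc0 : 0 ≤ c) :
    ∃ g : ℝ → ℝ, ContinuousOn g (Icc 0 c) ∧ ∀ x, ((g x : ℝ) : Torus) = φ x := by
  have hu : UniformContinuousOn φ (Icc 0 c) :=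
    (isCompact_Icc).uniformContinuousOn_of_continuous hφ.continuousOn
  rw [Metric.uniformContinuousOn_iff] at hu
  obtain ⟨δ, hδ, hδ'⟩ := hu (1/4) (by norm_num)
  obtain ⟨n, hn⟩ := exists_nat_gt (c / δ)
  set N : ℕ := n + 1 with hN
  have hN0 : 0 < (N:ℝ) := by positivity
  have hcN : c / (N:ℝ) < δ := by
    rw [div_lt_iff₀ hN0]
    have h5 : c / δ < N := lt_of_lt_of_le hn (by exact_mod_cast Nat.le_succ n)
    calc c = (c / δ) * δ := by field_simp
    _ < N * δ := mul_lt_mul_of_pos_right h5 hδ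
    _ = δ * N := by ring
  refine ⟨fun x => rho (φ 0) +
      ∑ j ∈ Finset.range N, rho (φ ((((j:ℕ):ℝ)+1)*x/N) - φ (((j:ℕ):ℝ)*x/N)), ?_, ?_⟩
  · apply ContinuousOn.add continuousOn_const
    apply continuousOn_finset_sum
    intro j hj
    rw [Finset.mem_range] at hj
    intro x hx
    obtain ⟨hx0, hxc⟩ := hx
    have harg : ∀ (r : ℝ), 0 ≤ r → r ≤ (N:ℝ) → r * x / N ∈ Icc (0:ℝ) c := by
      intro r hr0 hrN
      constructor
      · positivity
      · rw [div_le_iff₀ hN0]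
        calc r * x ≤ N * x := mul_le_mul_of_nonneg_right hrN hx0
        _ ≤ N * c := mul_le_mul_of_nonneg_left hxc (le_of_lt hN0)
        _ = c * N := by ring
    have hj1 : ((j:ℝ)+1) ≤ (N:ℝ) := by exact_mod_cast hj
    have hnorm : ‖φ (((j:ℝ)+1)*x/N) - φ ((j:ℝ)*x/N)‖ < 1/2 := by
      have hd : dist (φ (((j:ℝ)+1)*x/N)) (φ ((j:ℝ)*x/N)) < 1/4 := by
        apply hδ' _ (harg _ (by positivity) hj1) _
          (harg _ (by positivity) (le_trans (by linarith) hj1))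
        rw [Real.dist_eq]
        have he : ((j:ℝ)+1)*x/N - (j:ℝ)*x/N = x / N := by ring
        rw [he, abs_of_nonneg (by positivity)]
        calc x / (N:ℝ) ≤ c / N := by gcongr
        _ < δ := hcN
      rw [dist_eq_norm] at hd
      linarith
    have hinner : ContinuousAt (fun x : ℝ => φ (((j:ℝ)+1)*x/N) - φ ((j:ℝ)*x/N)) x :=
      ((hφ.comp (by continuity)).sub (hφ.comp (by continuity))).continuousAt
    exact (ContinuousAt.comp (f := fun x : ℝ => φ (((j:ℝ)+1)*x/N) - φ ((j:ℝ)*x/N))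
      (continuousAt_rho hnorm) hinner).continuousWithinAt
  · intro x
    have hsum : ((∑ j ∈ Finset.range N, rho (φ ((((j:ℕ):ℝ)+1)*x/N) - φ (((j:ℕ):ℝ)*x/N)) : ℝ) : Torus)
        = ∑ j ∈ Finset.range N, (φ (((j:ℝ)+1)*x/N) - φ ((j:ℝ)*x/N)) := by
      rw [coe_sum]
      exact Finset.sum_congr rfl fun j _ => rho_coe _
    have hstep : ((rho (φ 0) +
          ∑ j ∈ Finset.range N, rho (φ ((((j:ℕ):ℝ)+1)*x/N) - φ (((j:ℕ):ℝ)*x/N)) : ℝ) : Torus)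
        = φ 0 + ∑ j ∈ Finset.range N, (φ (((j:ℝ)+1)*x/N) - φ ((j:ℝ)*x/N)) := by
      rw [show ((rho (φ 0) +
          ∑ j ∈ Finset.range N, rho (φ ((((j:ℕ):ℝ)+1)*x/N) - φ (((j:ℕ):ℝ)*x/N)) : ℝ) : Torus)
        = ((rho (φ 0) : ℝ) : Torus) +
          ((∑ j ∈ Finset.range N, rho (φ ((((j:ℕ):ℝ)+1)*x/N) - φ (((j:ℕ):ℝ)*x/N)) : ℝ) : Torus) from rfl,
        rho_coe, hsum]
    have htel := Finset.sum_range_sub (fun j : ℕ => φ ((j:ℝ)*x/N)) N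
    simp only [Nat.cast_add, Nat.cast_one] at htel
    rw [hstep, htel]
    have h1 : (N:ℝ)*x/N = x := by field_simp
    have h2 : (0:ℝ)*x/N = 0 := by ring
    rw [show ((0:ℕ):ℝ) = (0:ℝ) by norm_num, h1, h2]
    simp



lemma skew_iterate (α : Torus) (h : Torus → Torus) (m : ℕ) (p : Torus × Torus) :
    (skew α h)^[m] p = (p.1 + m • α, p.2 + ∑ i ∈ Finset.range m, h (p.1 + i • α)) := by
  induction m with
  | zero => simp
  | succ m ih =>
    rw [Function.iterate_succ_apply', ih]
    unfold skew
    simp only [Finset.sum_range_succ, succ_nsmul]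
    exact Prod.ext (by simp [add_assoc]) (by simp [add_assoc])

lemma coe_sub (r s : ℝ) : ((r - s : ℝ) : Torus) = (r : Torus) - (s : Torus) := rfl


end SkewAux

open MeasureTheory SkewAux in
theorem skew_product_bohr0_large_returns (α : Torus) (h : Torus → Torus)
    (hc : Continuous h) :
    ∀ ε : ℝ, 0 < ε →
      IsBohr0 {m : ℕ | ∃ p : Torus × Torus,
        dist p.1 ((skew α h)^[m] p).1 + dist p.2 ((skew α h)^[m] p).2 < ε} := by
  intro ε hε
  have hcoe : Continuous (fun x : ℝ => (x : Torus)) := AddCircle.continuous_mk' 1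
  set H : ℝ → Torus := fun x => h (x : Torus) with hHdef
  have hH : Continuous H := hc.comp hcoe
  obtain ⟨g, hgcont, hgcoe⟩ := exists_partial_lift H hH 1 zero_le_one
  set a' : ℝ := (AddCircle.equivIco (1:ℝ) 0 α : ℝ) with ha'
  have ha'mem : a' ∈ Ico (0:ℝ) (0+1) := (AddCircle.equivIco (1:ℝ) 0 α).2
  have ha'coe : ((a' : ℝ) : Torus) = α := (AddCircle.equivIco (1:ℝ) 0).symm_apply_apply α
  by_cases hk : g 1 = g 0
  · -- winding number zero
    set ψ : Torus → ℝ := AddCircle.liftIco 1 0 g with hψdef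
    have hψc : Continuous ψ :=
      AddCircle.liftIco_continuous (by rw [zero_add]; exact hk.symm) (by rwa [zero_add])
    have hψcoe : ∀ t : Torus, ((ψ t : ℝ) : Torus) = h t := by
      intro t
      set xt := AddCircle.equivIco (1:ℝ) 0 t with hxt
      have h1 : ((xt : ℝ) : Torus) = t := (AddCircle.equivIco (1:ℝ) 0).symm_apply_apply t
      rw [← h1, hψdef, AddCircle.liftIco_coe_apply xt.2]
      exact hgcoe xt
    set β : ℝ := ∫ t, ψ t with hβdef
    refine ⟨2, ![α, ((β : ℝ) : Torus)], ε, hε, ?_⟩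
    intro m hm hsum
    rw [Fin.sum_univ_two] at hsum
    simp only [Matrix.cons_val_zero, Matrix.cons_val_one, Matrix.head_cons] at hsum
    set F : Torus → ℝ := fun t => ∑ i ∈ Finset.range m, ψ (t + i • α) with hFdef
    have hFc : Continuous F :=
      continuous_finset_sum _ (fun i _ => hψc.comp (continuous_id.add continuous_const))
    have hintF : Integrable F := by
      rw [← integrableOn_univ]; exact hFc.continuousOn.integrableOn_compact isCompact_univ
    have hintψ : ∀ c : Torus, Integrable (fun t => ψ (t + c)) := by
      intro c
      rw [← integrableOn_univ]
      exact (hψc.comp (continuous_id.add continuous_const)).continuousOn.integrableOn_compact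
        isCompact_univ
    have hIF : ∫ t, F t = m * β := by
      rw [hFdef]
      rw [integral_finset_sum _ (fun i _ => hintψ (i • α))]
      have : ∀ i ∈ Finset.range m, ∫ t, ψ (t + i • α) = β :=
        fun i _ => integral_add_right_eq_self ψ (i • α)
      rw [Finset.sum_congr rfl this, Finset.sum_const, Finset.card_range, nsmul_eq_mul]
    have hvol : (volume (univ : Set Torus)).toReal = 1 := by
      rw [AddCircle.measure_univ]; norm_num
    obtain ⟨t₀, -, ht₀'⟩ := isCompact_univ.exists_isMinOn univ_nonempty hFc.continuousOn
    obtain ⟨t₁, -, ht₁'⟩ := isCompact_univ.exists_isMaxOn univ_nonempty hFc.continuousOn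
    have ht₀ : ∀ t : Torus, F t₀ ≤ F t := fun t => ht₀' (mem_univ t)
    have ht₁ : ∀ t : Torus, F t ≤ F t₁ := fun t => ht₁' (mem_univ t)
    have hlow : F t₀ ≤ m * β := by
      have hmono := integral_mono (integrable_const (F t₀)) hintF (fun t => ht₀ t)
      rwa [integral_const, measureReal_def, hvol, smul_eq_mul, one_mul, hIF] at hmono
    have hhigh : m * β ≤ F t₁ := by
      have hmono := integral_mono hintF (integrable_const (F t₁)) (fun t => ht₁ t)
      rwa [integral_const, measureReal_def, hvol, smul_eq_mul, one_mul, hIF] at hmono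
    obtain ⟨t, ht⟩ := intermediate_value_univ t₀ t₁ hFc ⟨hlow, hhigh⟩
    refine ⟨(t, 0), ?_⟩
    rw [skew_iterate]
    have hdisp : ∑ i ∈ Finset.range m, h (t + i • α) = ((m * β : ℝ) : Torus) := by
      rw [← ht, hFdef]
      rw [coe_sum]
      exact (Finset.sum_congr rfl (fun i _ => hψcoe _)).symm
    simp only [dist_self_add_right]
    rw [hdisp]
    have hcast : ((m * β : ℝ) : Torus) = m • ((β : ℝ) : Torus) := by
      rw [← coe_nsmul, nsmul_eq_mul]
    rw [hcast]
    exact hsum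
  · -- nonzero winding number
    refine ⟨2, ![α, 0], ε, hε, ?_⟩
    intro m hm hsum
    rw [Fin.sum_univ_two] at hsum
    simp only [Matrix.cons_val_zero, Matrix.cons_val_one, Matrix.head_cons, smul_zero,
      norm_zero, add_zero] at hsum
    obtain ⟨g', hg'c, hg'coe⟩ := exists_partial_lift H hH (m+1) (by positivity)
    have hper : ∀ y : ℝ, H (y + 1) = H y := fun y => congrArg h (AddCircle.coe_add_period 1 y)
    have hsub_int : ∀ (u v : ℝ), ((u : Torus)) = ((v : Torus)) → ∃ z : ℤ, u - v = z := by
      intro u v huv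
      have h0 : ((u - v : ℝ) : Torus) = 0 := by
        rw [coe_sub, huv, sub_self]
      rw [AddCircle.coe_eq_zero_iff] at h0
      obtain ⟨z, hz⟩ := h0
      exact ⟨z, by rw [← hz, zsmul_eq_mul, mul_one]⟩
    set k : ℝ := g 1 - g 0 with hkdef
    -- g' has the same winding increment as g
    have hgg' : g' 1 - g' 0 = k := by
      have hd : ContinuousOn (fun x => g x - g' x) (Icc (0:ℝ) 1) := by
        apply hgcont.sub (hg'c.mono ?_)
        apply Icc_subset_Icc le_rfl
        have h1m : (1:ℝ) ≤ (m:ℝ) := by exact_mod_cast hm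
        push_cast; linarith
      have hdint : ∀ x ∈ Icc (0:ℝ) 1, ∃ z : ℤ, g x - g' x = z := by
        intro x _
        exact hsub_int _ _ (by rw [hgcoe, hg'coe])
      have hcst := intval_const (isPreconnected_Icc) hd hdint
        (⟨le_refl 0, zero_le_one⟩ : (0:ℝ) ∈ Icc (0:ℝ) 1) ⟨zero_le_one, le_refl 1⟩
      -- hcst : g 0 - g' 0 = g 1 - g' 1
      rw [hkdef]; linarith
    have hkne : k ≠ 0 := fun hk0 => hk (by rw [hkdef] at hk0; linarith)
    obtain ⟨zk, hzk⟩ : ∃ z : ℤ, k = z := by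
      refine hsub_int (g 1) (g 0) ?_
      rw [hgcoe, hgcoe]
      have : ((1 : ℝ) : Torus) = ((0:ℝ) : Torus) := by
        have := AddCircle.coe_add_period (1:ℝ) 0
        rwa [zero_add] at this
      rw [hHdef]
      simp only []
      rw [this]
    have hzkne : zk ≠ 0 := by
      intro hzz; rw [hzz] at hzk; exact hkne (by exact_mod_cast hzk)
    have hzkabs : (1:ℝ) ≤ |k| := by
      rw [hzk]
      exact_mod_cast Int.one_le_abs hzkne
    -- the increment of g' over unit translation is constant = k on [0, m]
    have hKconst : ∀ y ∈ Icc (0:ℝ) m, g' (y + 1) - g' y = k := by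
      intro y hy
      have hKc : ContinuousOn (fun y => g' (y + 1) - g' y) (Icc (0:ℝ) m) := by
        apply ContinuousOn.sub
        · apply hg'c.comp (continuous_add_right 1).continuousOn
          intro u hu
          simp only [mem_Icc] at hu ⊢
          constructor <;> push_cast <;> linarith [hu.1, hu.2]
        · apply hg'c.mono
          apply Icc_subset_Icc le_rfl
          push_cast; linarith
      have hKint : ∀ y ∈ Icc (0:ℝ) m, ∃ z : ℤ, g' (y + 1) - g' y = z := by
        intro y _
        refine hsub_int _ _ ?_
        rw [hg'coe, hg'coe, hHdef]
        simp only []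
        congr 1
        have := AddCircle.coe_add_period (1:ℝ) y
        exact this
      have hm' : (0:ℝ) ≤ m := by positivity
      have h0mem : (0:ℝ) ∈ Icc (0:ℝ) m := ⟨le_refl 0, hm'⟩
      have := intval_const isPreconnected_Icc hKc hKint hy h0mem
      rw [this]
      simpa using hgg'
    -- the lift of the Birkhoff sum along [0,1]
    set L : ℝ → ℝ := fun x => ∑ i ∈ Finset.range m, g' (x + i * a') with hLdef
    have hLc : ContinuousOn L (Icc (0:ℝ) 1) := by
      apply continuousOn_finset_sum
      intro i hi
      rw [Finset.mem_range] at hi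
      apply hg'c.comp (continuous_add_right _).continuousOn
      intro u hu
      simp only [mem_Icc] at hu ⊢
      have hia : (0:ℝ) ≤ (i:ℝ) * a' := mul_nonneg (by positivity) ha'mem.1
      constructor
      · linarith [hu.1]
      · have hi1 : (i:ℝ) ≤ (m:ℝ) - 1 := by
          have : (i:ℝ) + 1 ≤ m := by exact_mod_cast hi
          linarith
        have : (i:ℝ) * a' ≤ (m:ℝ) - 1 := by
          calc (i:ℝ) * a' ≤ (i:ℝ) * 1 := by
                apply mul_le_mul_of_nonneg_left (le_of_lt ?_) (by positivity)
                simpa using ha'mem.2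
          _ = (i:ℝ) := mul_one _
          _ ≤ (m:ℝ) - 1 := hi1
        push_cast
        linarith [hu.2]
    have hL10 : L 1 - L 0 = m * k := by
      rw [hLdef]
      simp only []
      rw [← Finset.sum_sub_distrib]
      have : ∀ i ∈ Finset.range m, g' (1 + i * a') - g' (0 + i * a') = k := by
        intro i hi
        rw [Finset.mem_range] at hi
        have h1 : (1:ℝ) + i * a' = (i * a') + 1 := by ring
        have h2 : (0:ℝ) + i * a' = i * a' := by ring
        rw [h1, h2]
        apply hKconst
        constructor
        · exact mul_nonneg (by positivity) ha'mem.1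
        · have hi1 : (i:ℝ) ≤ (m:ℝ) - 1 := by
            have : (i:ℝ) + 1 ≤ m := by exact_mod_cast hi
            linarith
          calc (i:ℝ) * a' ≤ (i:ℝ) * 1 := by
                apply mul_le_mul_of_nonneg_left (le_of_lt ?_) (by positivity)
                simpa using ha'mem.2
          _ = (i:ℝ) := mul_one _
          _ ≤ (m:ℝ) := by linarith
      rw [Finset.sum_congr rfl this, Finset.sum_const, Finset.card_range, nsmul_eq_mul]
    -- find a point where L is an integer
    have hm1 : (1:ℝ) ≤ m := by exact_mod_cast hm
    have hgap : 1 ≤ |L 1 - L 0| := by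
      rw [hL10, abs_mul, abs_of_nonneg (by positivity : (0:ℝ) ≤ (m:ℝ))]
      calc (1:ℝ) = 1 * 1 := by ring
      _ ≤ (m:ℝ) * |k| := by
          apply mul_le_mul hm1 hzkabs zero_le_one (by positivity)
    set z : ℤ := ⌈min (L 0) (L 1)⌉ with hz
    have hz1 : min (L 0) (L 1) ≤ (z:ℝ) := Int.le_ceil _
    have hz2 : (z:ℝ) ≤ max (L 0) (L 1) := by
      have hc1 : (z:ℝ) ≤ min (L 0) (L 1) + 1 := by
        have := Int.ceil_lt_add_one (min (L 0) (L 1))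
        linarith
      have : min (L 0) (L 1) + 1 ≤ max (L 0) (L 1) := by
        rcases le_total (L 0) (L 1) with hle | hle
        · rw [min_eq_left hle, max_eq_right hle]
          rw [abs_of_nonneg (by linarith)] at hgap <;> linarith
        · rw [min_eq_right hle, max_eq_left hle]
          rw [abs_of_nonpos (by linarith)] at hgap <;> linarith
      linarith
    have hzmem : (z:ℝ) ∈ uIcc (L 0) (L 1) := by
      rw [uIcc]
      exact ⟨hz1, hz2⟩
    have hLc' : ContinuousOn L (uIcc (0:ℝ) 1) := by
      rwa [uIcc_of_le zero_le_one]
    obtain ⟨x, hxmem, hx⟩ := intermediate_value_uIcc hLc' hzmem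
    refine ⟨((x : Torus), 0), ?_⟩
    rw [skew_iterate]
    simp only [dist_self_add_right]
    have hdisp : ∑ i ∈ Finset.range m, h ((x:Torus) + i • α) = 0 := by
      have hterm : ∀ i ∈ Finset.range m, h ((x:Torus) + i • α) = ((g' (x + i * a') : ℝ) : Torus) := by
        intro i _
        have hpt : (x:Torus) + i • α = ((x + i * a' : ℝ) : Torus) := by
          rw [← ha'coe, ← coe_nsmul, nsmul_eq_mul]
          rfl
        rw [hpt]
        exact (hg'coe _).symm
      rw [Finset.sum_congr rfl hterm, ← coe_sum,
        show (∑ i ∈ Finset.range m, g' (x + (i:ℝ) * a')) = (z:ℝ) from hx]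
      rw [AddCircle.coe_eq_zero_iff]
      exact ⟨z, by rw [zsmul_eq_mul, mul_one]⟩
    rw [hdisp]
    simpa using hsum
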